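/- arXiv:1607.03308 — 5 statements merged into one kernel-verified Lean document; each statement's English description precedes it below -/
import Mathlib

section
/- Let Φ be a crystallographic root system with positive roots Φ⁺, and let β, β′ ∈ Φ⁺ be such that β′ − β is a (nonempty) sum of positive roots. Then there exist positive roots γ₁, …, γ_m ∈ Φ⁺ such that β′ − β = γ₁ + ⋯ + γ_m and β + γ₁ + ⋯ + γ_i ∈ Φ⁺ for all i ≤ m. -/
open scoped RealInnerProductSpace

/-- A finite crystallographic root system in a real inner product space. -/
structure IsRootSystem {V : Type*} [NormedAddCommGroup V] [InnerProductSpace ℝ V]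
    (Φ : Set V) : Prop where
  finite : Φ.Finite
  ne_zero : ∀ α ∈ Φ, α ≠ (0 : V)
  neg_mem : ∀ α ∈ Φ, -α ∈ Φ
  reflect_mem : ∀ α ∈ Φ, ∀ β ∈ Φ, β - (2 * ⟪β, α⟫ / ⟪α, α⟫) • α ∈ Φ
  crystallographic : ∀ α ∈ Φ, ∀ β ∈ Φ, ∃ n : ℤ, 2 * ⟪β, α⟫ / ⟪α, α⟫ = (n : ℝ)

/-- A choice of positive roots for a root system. -/
structure IsPositiveSystem {V : Type*} [NormedAddCommGroup V] [InnerProductSpace ℝ V]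
    (Φ pos : Set V) : Prop where
  subset : pos ⊆ Φ
  mem_or_neg_mem : ∀ α ∈ Φ, α ∈ pos ∨ -α ∈ pos
  not_both : ∀ α ∈ pos, -α ∉ pos
  add_mem : ∀ α ∈ pos, ∀ β ∈ pos, α + β ∈ Φ → α + β ∈ pos

section Aux

variable {V : Type*} [NormedAddCommGroup V] [InnerProductSpace ℝ V] {Φ pos : Set V}

private lemma aux_inner_self_pos {x : V} (hx : x ≠ 0) : (0:ℝ) < ⟪x, x⟫ :=
  lt_of_le_of_ne real_inner_self_nonneg (fun h => hx (inner_self_eq_zero.mp h.symm))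

private lemma aux_inner_list_sum' (x : V) (l : List V) :
    ⟪l.sum, x⟫ = (l.map (fun γ => ⟪γ, x⟫)).sum := by
  induction l with
  | nil => simp
  | cons a t ih => simp [inner_add_left, ih]

private lemma aux_sum_nonpos (l : List ℝ) (h : ∀ x ∈ l, x ≤ 0) : l.sum ≤ 0 := by
  induction l with
  | nil => simp
  | cons a t ih =>
    simp only [List.sum_cons]
    have h1 := h a (by simp)
    have h2 := ih (fun x hx => h x (by simp [hx]))
    linarith

private lemma aux_inner_list_sum (x : V) (l : List V) :
    ⟪x, l.sum⟫ = (l.map (fun γ => ⟪x, γ⟫)).sum := by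
  induction l with
  | nil => simp
  | cons a t ih => simp [inner_add_right, ih]

/-- Key lemma: if `α, β` are roots, `⟪α, β⟫ > 0` and `α ≠ β`, then `β - α` is a root. -/
private lemma aux_sub_mem (hΦ : IsRootSystem Φ) {α β : V} (hα : α ∈ Φ) (hβ : β ∈ Φ)
    (hip : 0 < ⟪α, β⟫) (hne : α ≠ β) : β - α ∈ Φ := by
  obtain ⟨n, hn⟩ := hΦ.crystallographic α hα β hβ
  obtain ⟨m, hm⟩ := hΦ.crystallographic β hβ α hα
  have ha : (0:ℝ) < ⟪α, α⟫ := aux_inner_self_pos (hΦ.ne_zero α hα)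
  have hb : (0:ℝ) < ⟪β, β⟫ := aux_inner_self_pos (hΦ.ne_zero β hβ)
  have hba : ⟪β, α⟫ = ⟪α, β⟫ := (real_inner_comm β α).symm
  have hn' : 2 * ⟪α, β⟫ = (n : ℝ) * ⟪α, α⟫ := by
    have := (div_eq_iff ha.ne').mp hn; rw [hba] at this; exact this
  have hm' : 2 * ⟪α, β⟫ = (m : ℝ) * ⟪β, β⟫ := by
    have := (div_eq_iff hb.ne').mp hm; exact this
  have hn1 : 1 ≤ n := by
    have h0 : (0:ℝ) < (n:ℝ) := by nlinarith
    have := Int.cast_pos.mp h0; omega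
  have hm1 : 1 ≤ m := by
    have h0 : (0:ℝ) < (m:ℝ) := by nlinarith
    have := Int.cast_pos.mp h0; omega
  rcases eq_or_lt_of_le hn1 with h1 | h2
  · -- n = 1 : reflection of β in α is β - α
    have := hΦ.reflect_mem α hα β hβ
    rw [hn, ← h1] at this
    simpa using this
  rcases eq_or_lt_of_le hm1 with h1 | h2'
  · -- m = 1 : reflection of α in β is α - β
    have := hΦ.reflect_mem β hβ α hα
    rw [hm, ← h1] at this
    have := hΦ.neg_mem _ this
    simpa using this
  -- n ≥ 2 and m ≥ 2 : forces n = m = 2 and β = α, contradiction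
  exfalso
  have hcs : ⟪α, β⟫ * ⟪α, β⟫ ≤ ⟪α, α⟫ * ⟪β, β⟫ := real_inner_mul_inner_self_le α β
  have hnm : (n:ℝ) * (m:ℝ) ≤ 4 := by
    have h4 : ((n:ℝ) * ⟪α, α⟫) * ((m:ℝ) * ⟪β, β⟫) = 4 * (⟪α, β⟫ * ⟪α, β⟫) := by
      rw [← hn', ← hm']; ring
    nlinarith [mul_pos ha hb, mul_pos (mul_pos ha hb) (mul_pos ha hb), hcs, h4, sq_nonneg (⟪α,β⟫)]
  have hn2 : (2:ℤ) ≤ n := h2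
  have hm2 : (2:ℤ) ≤ m := h2'
  have hnm' : n * m ≤ 4 := by exact_mod_cast hnm
  have hn2' : n = 2 ∧ m = 2 := by
    constructor <;> nlinarith
  obtain ⟨rfl, rfl⟩ := hn2'
  -- then ⟪α,β⟫ = ⟪α,α⟫ = ⟪β,β⟫, so ⟪β-α, β-α⟫ = 0
  have hca : ⟪α, β⟫ = ⟪α, α⟫ := by push_cast at hn'; linarith
  have hcb : ⟪α, β⟫ = ⟪β, β⟫ := by push_cast at hm'; linarith
  have : ⟪β - α, β - α⟫ = 0 := by
    rw [inner_sub_sub_self]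
    rw [real_inner_comm β α]
    linarith
  have : β - α = 0 := inner_self_eq_zero.mp this
  exact hne (sub_eq_zero.mp this).symm

private lemma aux_sub_mem' (hΦ : IsRootSystem Φ) {α β : V} (hα : α ∈ Φ) (hβ : β ∈ Φ)
    (hip : ⟪α, β⟫ < 0) (hne : α ≠ -β) : α + β ∈ Φ := by
  have h1 : (0:ℝ) < ⟪-α, β⟫ := by rw [inner_neg_left]; linarith
  have h2 : -α ≠ β := fun h => hne (by rw [← h]; simp)
  have := aux_sub_mem hΦ (hΦ.neg_mem α hα) hβ h1 h2
  simpa [sub_neg_eq_add, add_comm] using this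

/-- No nonempty list of positive roots sums to zero. -/
private lemma aux_no_zero_sum (hΦ : IsRootSystem Φ) (hpos : IsPositiveSystem Φ pos) :
    ∀ n : ℕ, ∀ l : List V, l.length ≤ n → l ≠ [] → (∀ γ ∈ l, γ ∈ pos) → l.sum ≠ 0 := by
  intro n
  induction n with
  | zero => intro l hl hne _; simp [List.length_eq_zero_iff] at hl; exact absurd hl hne
  | succ n ih =>
    intro l hl hne hmem hsum
    obtain ⟨γ, t, rfl⟩ : ∃ γ t, l = γ :: t := by
      cases l with
      | nil => exact absurd rfl hne
      | cons a t => exact ⟨a, t, rfl⟩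
    have hγ : γ ∈ pos := hmem γ (by simp)
    have hγΦ : γ ∈ Φ := hpos.subset hγ
    have hγ0 : (0:ℝ) < ⟪γ, γ⟫ := aux_inner_self_pos (hΦ.ne_zero γ hγΦ)
    have hts : (γ : V) + t.sum = 0 := by simpa using hsum
    -- ⟪γ, t.sum⟫ = -⟪γ,γ⟫ < 0, so some δ ∈ t has ⟪γ,δ⟫ < 0
    have hneg : ⟪γ, t.sum⟫ < 0 := by
      have h : t.sum = -γ := eq_neg_of_add_eq_zero_right hts
      rw [h, inner_neg_right]; linarith
    obtain ⟨δ, hδt, hδneg⟩ : ∃ δ ∈ t, ⟪γ, δ⟫ < 0 := by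
      by_contra hc
      push_neg at hc
      have : (0:ℝ) ≤ ⟪γ, t.sum⟫ := by
        rw [aux_inner_list_sum]
        apply List.sum_nonneg
        intro x hx
        obtain ⟨δ, hδ, rfl⟩ := List.mem_map.mp hx
        exact hc δ hδ
      linarith
    have hδ : δ ∈ pos := hmem δ (by simp [hδt])
    have hδΦ : δ ∈ Φ := hpos.subset hδ
    have hne2 : γ ≠ -δ := by
      intro h
      exact hpos.not_both δ hδ (by rw [← h]; exact hγ)
    have hsumΦ : γ + δ ∈ Φ := aux_sub_mem' hΦ hγΦ hδΦ hδneg hne2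
    have hsumpos : γ + δ ∈ pos := hpos.add_mem γ hγ δ hδ hsumΦ
    -- remove δ from t, make new list (γ+δ) :: (t₁ ++ t₂)
    obtain ⟨t₁, t₂, rfl⟩ := List.append_of_mem hδt
    refine ih ((γ + δ) :: (t₁ ++ t₂)) ?_ (by simp) ?_ ?_
    · have := hl; simp at this ⊢; omega
    · intro x hx
      rcases List.mem_cons.mp hx with rfl | hx
      · exact hsumpos
      · apply hmem; simp at hx ⊢; tauto
    · have : (t₁ ++ δ :: t₂).sum = δ + (t₁ ++ t₂).sum := by
        simp [List.sum_append]; abel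
      simp only [List.sum_cons] at hsum ⊢
      rw [this] at hsum
      rw [show γ + δ + (t₁ ++ t₂).sum = γ + (δ + (t₁ ++ t₂).sum) by abel]
      exact hsum

end Aux

section Main

variable {V : Type*} [NormedAddCommGroup V] [InnerProductSpace ℝ V] {Φ pos : Set V}

private lemma aux_main (hΦ : IsRootSystem Φ) (hpos : IsPositiveSystem Φ pos) :
    ∀ n : ℕ, ∀ β β' : V, β ∈ pos → β' ∈ pos → ∀ l : List V, l.length ≤ n → l ≠ [] →
      (∀ γ ∈ l, γ ∈ pos) → l.sum = β' - β →
      ∃ l' : List V, l' ≠ [] ∧ (∀ γ ∈ l', γ ∈ pos) ∧ l'.sum = β' - β ∧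
        ∀ i ≤ l'.length, β + (l'.take i).sum ∈ pos := by
  intro n
  induction n with
  | zero =>
    intro β β' _ _ l hl hne _ _
    simp [List.length_eq_zero_iff] at hl; exact absurd hl hne
  | succ n ih =>
    intro β β' hβ hβ' l hl hne hmem hsum
    -- if l = [γ] is a singleton we are done
    match l, hne with
    | [γ], _ =>
      refine ⟨[γ], by simp, by simpa using hmem, by simpa using hsum, ?_⟩
      intro i hi
      have hi1 : i = 0 ∨ i = 1 := by simp at hi; omega
      rcases hi1 with rfl | rfl
      · simpa using hβ
      · have : γ = β' - β := by simpa using hsum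
        simp [this]
        simpa [show β + (β' - β) = β' by abel] using hβ'
    | γ₀ :: γ₁ :: t, _ =>
      set l : List V := γ₀ :: γ₁ :: t with hldef
      have hlne : l ≠ [] := by simp [hldef]
      have hsne : l.sum ≠ 0 := aux_no_zero_sum hΦ hpos (n+1) l hl hlne hmem
      have hspos : (0:ℝ) < ⟪l.sum, l.sum⟫ := aux_inner_self_pos hsne
      -- find γ ∈ l with ⟪γ, l.sum⟫ > 0
      obtain ⟨γ, hγl, hγip⟩ : ∃ γ ∈ l, 0 < ⟪γ, l.sum⟫ := by
        by_contra hc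
        push_neg at hc
        have : ⟪l.sum, l.sum⟫ ≤ 0 := by
          rw [aux_inner_list_sum']
          apply aux_sum_nonpos
          intro x hx
          obtain ⟨δ, hδ, rfl⟩ := List.mem_map.mp hx
          exact hc δ hδ
        linarith
      have hγ : γ ∈ pos := hmem γ hγl
      have hγΦ : γ ∈ Φ := hpos.subset hγ
      -- split l at γ : the rest of the list
      obtain ⟨t₁, t₂, hsplit⟩ := List.append_of_mem hγl
      set rest : List V := t₁ ++ t₂ with hrdef
      have hrest_sum : rest.sum = l.sum - γ := by
        rw [hsplit]; simp [hrdef, List.sum_append]; abel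
      have hrest_mem : ∀ x ∈ rest, x ∈ pos := by
        intro x hx
        apply hmem
        rw [hsplit]
        simp [hrdef] at hx ⊢; tauto
      have hrest_len : rest.length + 1 = l.length := by
        rw [hsplit]; simp [hrdef]; omega
      have hrest_ne : rest ≠ [] := by
        have : 2 ≤ l.length := by simp [hldef]
        intro h
        rw [h] at hrest_len
        simp at hrest_len
        omega
      have hrest_len' : rest.length ≤ n := by omega
      have hβ'Φ : β' ∈ Φ := hpos.subset hβ'
      have hβΦ : β ∈ Φ := hpos.subset hβ
      rw [hsum, inner_sub_right] at hγip
      by_cases hcb : ⟪γ, β⟫ < 0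
      · -- Case A : β + γ is a positive root
        have hne2 : γ ≠ -β := fun h => hpos.not_both β hβ (by rw [← h]; exact hγ)
        have h1 : γ + β ∈ Φ := aux_sub_mem' hΦ hγΦ hβΦ hcb hne2
        have h2 : β + γ ∈ Φ := by rwa [add_comm] at h1
        have h3 : β + γ ∈ pos := hpos.add_mem β hβ γ hγ h2
        have h4 : rest.sum = β' - (β + γ) := by rw [hrest_sum, hsum]; abel
        obtain ⟨l', hl'ne, hl'mem, hl'sum, hl'part⟩ :=
          ih (β + γ) β' h3 hβ' rest hrest_len' hrest_ne hrest_mem h4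
        refine ⟨γ :: l', by simp, ?_, ?_, ?_⟩
        · intro x hx
          rcases List.mem_cons.mp hx with rfl | hx
          · exact hγ
          · exact hl'mem x hx
        · simp only [List.sum_cons, hl'sum]; abel
        · intro i hi
          cases i with
          | zero => simpa using hβ
          | succ j =>
            simp only [List.take_succ_cons, List.sum_cons]
            rw [show β + (γ + (l'.take j).sum) = (β + γ) + (l'.take j).sum by abel]
            exact hl'part j (by simpa using hi)
      · -- Case B : β' - γ is a positive root
        push_neg at hcb
        have hcb' : 0 < ⟪γ, β'⟫ := by linarith
        have hne2 : γ ≠ β' := by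
          rintro rfl
          -- then rest.sum = -β, so rest ++ [β] is a nonempty positive list summing to 0
          have : (rest ++ [β]).sum = 0 := by
            rw [List.sum_append, hrest_sum, hsum]
            simp only [List.sum_cons, List.sum_nil]; abel
          refine aux_no_zero_sum hΦ hpos (rest.length + 1) (rest ++ [β]) (by simp) (by simp)
            ?_ this
          intro x hx
          rcases List.mem_append.mp hx with hx | hx
          · exact hrest_mem x hx
          · simp at hx; subst hx; exact hβ
        have h1 : β' - γ ∈ Φ := aux_sub_mem hΦ hγΦ hβ'Φ hcb' hne2
        have h2 : β' - γ ∈ pos := by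
          rcases hpos.mem_or_neg_mem _ h1 with h | h
          · exact h
          · exfalso
            -- rest ++ [-(β'-γ), β] sums to 0
            have hzero : (rest ++ [-(β' - γ), β]).sum = 0 := by
              rw [List.sum_append, hrest_sum, hsum]
              simp only [List.sum_cons, List.sum_nil]; abel
            refine aux_no_zero_sum hΦ hpos (rest ++ [-(β' - γ), β]).length _ le_rfl
              (by simp) ?_ hzero
            intro x hx
            rcases List.mem_append.mp hx with hx | hx
            · exact hrest_mem x hx
            · simp at hx
              rcases hx with rfl | rfl
              · rwa [neg_sub] at h
              · exact hβ
        have h4 : rest.sum = (β' - γ) - β := by rw [hrest_sum, hsum]; abel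
        obtain ⟨l', hl'ne, hl'mem, hl'sum, hl'part⟩ :=
          ih β (β' - γ) hβ h2 rest hrest_len' hrest_ne hrest_mem h4
        refine ⟨l' ++ [γ], by simp, ?_, ?_, ?_⟩
        · intro x hx
          rcases List.mem_append.mp hx with hx | hx
          · exact hl'mem x hx
          · simp at hx; subst hx; exact hγ
        · rw [List.sum_append, hl'sum]; simp; abel
        · intro i hi
          rcases le_or_gt i l'.length with h | h
          · rw [List.take_append_of_le_length h]
            exact hl'part i h
          · have hi' : (l' ++ [γ]).length ≤ i := by simp at hi ⊢; omega
            rw [List.take_of_length_le hi']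
            rw [List.sum_append, hl'sum]
            simp
            rw [show β + (β' - γ - β + γ) = β' by abel]
            exact hβ'

end Main


/-- If `β, β' ∈ Φ⁺` and `β' - β` is a (nonempty) sum of positive roots, then there are
positive roots `γ₁, …, γ_m` with `β' - β = γ₁ + ⋯ + γ_m` and all partial sums
`β + γ₁ + ⋯ + γ_i` positive roots. -/
theorem stmt0 {V : Type*} [NormedAddCommGroup V] [InnerProductSpace ℝ V]
    (Φ pos : Set V) (hΦ : IsRootSystem Φ) (hpos : IsPositiveSystem Φ pos)
    (β β' : V) (hβ : β ∈ pos) (hβ' : β' ∈ pos)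
    (h : ∃ l : List V, l ≠ [] ∧ (∀ γ ∈ l, γ ∈ pos) ∧ l.sum = β' - β) :
    ∃ l : List V, l ≠ [] ∧ (∀ γ ∈ l, γ ∈ pos) ∧ l.sum = β' - β ∧
      ∀ i ≤ l.length, β + (l.take i).sum ∈ pos := by
  obtain ⟨l, hne, hmem, hsum⟩ := h
  exact aux_main hΦ hpos l.length β β' hβ hβ' l le_rfl hne hmem hsum
end

section
/- Let Δ be an affine root system with invariant positive semi-definite symmetric bilinear form (·,·). Let η₁, …, η_t be pairwise orthogonal real roots and η_{t+1} a real root with (η_i, η_{t+1}) < 0 for all i ≤ t. Then the (t+1)×(t+1) matrix A with entries A_{ij} = ⟨η_j, η_i^∨⟩ = 2(η_j,η_i)/(η_i,η_i) is a generalized Cartan matrix of finite or affine type. -/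
/-!
The symmetrization `diag((η_i, η_i)) · A` of the matrix is the Gram matrix of the roots under
the invariant form, hence positive semi-definite. Since `η₁, …, η_t` are pairwise orthogonal
and non-isotropic, this Gram matrix contains an invertible diagonal `t × t` block, so its rank is
at least `t`, i.e. its corank is at most 1. The off-diagonal entries are `≤ 0` because they vanish
between the `η_i` with `i ≤ t` and are negative against `η_{t+1}`.
-/

open Matrix

section Gram

variable {K U ι : Type*} [Fintype ι]

theorem dotProduct_gram_mulVec [CommRing K] [AddCommGroup U] [Module K U]
    (B : U →ₗ[K] U →ₗ[K] K) (v : ι → U) (x : ι → K) :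
    x ⬝ᵥ (of fun i j => B (v i) (v j)) *ᵥ x = B (∑ i, x i • v i) (∑ i, x i • v i) := by
  simp only [dotProduct, mulVec, of_apply, map_sum, map_smul, LinearMap.sum_apply,
    LinearMap.smul_apply, smul_eq_mul, Finset.mul_sum]
  rw [Finset.sum_comm]
  exact Finset.sum_congr rfl fun _ _ => Finset.sum_congr rfl fun _ _ => by ring

theorem posSemidef_gram_of_nonneg [AddCommGroup U] [Module ℝ U] (B : U →ₗ[ℝ] U →ₗ[ℝ] ℝ)
    (hsymm : ∀ v w, B v w = B w v) (hpsd : ∀ v, 0 ≤ B v v) (v : ι → U) :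
    (of fun i j => B (v i) (v j)).PosSemidef := by
  refine posSemidef_iff_dotProduct_mulVec.2 ⟨?_, fun x => ?_⟩
  · ext i j
    simp [conjTranspose, hsymm (v i) (v j)]
  · rw [star_trivial, dotProduct_gram_mulVec]
    exact hpsd _

theorem rank_gram_of_orthogonal [Field K] [AddCommGroup U] [Module K U]
    (B : U →ₗ[K] U →ₗ[K] K) (v : ι → U) (horth : Pairwise fun i j => B (v i) (v j) = 0)
    (hne : ∀ i, B (v i) (v i) ≠ 0) :
    (of fun i j => B (v i) (v j)).rank = Fintype.card ι := by
  classical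
  have hdiag : (of fun i j => B (v i) (v j)) = diagonal fun i => B (v i) (v i) := by
    ext i j
    obtain rfl | hij := eq_or_ne i j
    · simp
    · simp [diagonal, hij, horth hij]
  rw [hdiag, rank_diagonal]
  exact Fintype.card_congr (Equiv.subtypeUnivEquiv hne)

end Gram

theorem stmt3_general {U : Type*} [AddCommGroup U] [Module ℝ U]
    (B : U →ₗ[ℝ] U →ₗ[ℝ] ℝ)
    (hsymm : ∀ v w : U, B v w = B w v)
    (hpsd : ∀ v : U, 0 ≤ B v v)
    (t : ℕ) (η : Fin (t + 1) → U)
    (hreal : ∀ i, 0 < B (η i) (η i))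
    (horth : ∀ i j : Fin (t + 1), i ≠ j → i ≠ Fin.last t → j ≠ Fin.last t →
      B (η i) (η j) = 0)
    (hneg : ∀ i : Fin (t + 1), i ≠ Fin.last t → B (η i) (η (Fin.last t)) < 0) :
    (∀ i, (2 * B (η i) (η i) / B (η i) (η i) : ℝ) = 2) ∧
    (∀ i j, i ≠ j → 2 * B (η i) (η j) / B (η i) (η i) ≤ 0) ∧
    (∀ i j, (2 * B (η i) (η j) / B (η i) (η i) = 0 ↔
             2 * B (η j) (η i) / B (η j) (η j) = 0)) ∧
    (∀ i j, B (η i) (η i) * (2 * B (η i) (η j) / B (η i) (η i)) = 2 * B (η i) (η j)) ∧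
    (Matrix.of fun i j => B (η i) (η j)).PosSemidef ∧
    t ≤ (Matrix.of fun i j : Fin (t + 1) => B (η i) (η j)).rank := by
  have hne : ∀ i, B (η i) (η i) ≠ 0 := fun i => (hreal i).ne'
  have hoff : ∀ i j, i ≠ j → B (η i) (η j) ≤ 0 := by
    intro i j hij
    by_cases hi : i = Fin.last t
    · subst hi
      exact hsymm _ _ ▸ (hneg j hij.symm).le
    by_cases hj : j = Fin.last t
    · exact hj ▸ (hneg i hi).le
    · exact (horth i j hij hi hj).le
  have hrank : (of fun i j : Fin t => B (η i.castSucc) (η j.castSucc)).rank = t := by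
    have horth' : Pairwise fun i j : Fin t => B (η i.castSucc) (η j.castSucc) = 0 :=
      fun i j hij => horth _ _ ((Fin.castSucc_injective t).ne hij)
        (Fin.castSucc_ne_last i) (Fin.castSucc_ne_last j)
    rw [rank_gram_of_orthogonal B (fun i : Fin t => η i.castSucc) horth' fun i => hne _, Fintype.card_fin]
  refine ⟨fun i => by field_simp [hne i], fun i j hij => ?_, fun i j => ?_,
    fun i j => by field_simp [hne i], posSemidef_gram_of_nonneg B hsymm hpsd η, ?_⟩
  · exact div_nonpos_of_nonpos_of_nonneg (by linarith [hoff i j hij]) (hreal i).le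
  · simp [hne i, hne j, hsymm (η i)]
  · exact hrank.ge.trans (rank_submatrix_le (of fun i j => B (η i) (η j)) Fin.castSucc Fin.castSucc)

/-- Let `B` be a positive semi-definite symmetric bilinear form (the invariant form of an
affine root system).  Let `η₁, …, η_t` be pairwise orthogonal real roots (non-isotropic,
with integral Cartan pairings) and `η_{t+1}` a real root with `(η_i, η_{t+1}) < 0` for all
`i ≤ t`.  Then the matrix `A` with `A i j = ⟨η_j, η_i^∨⟩ = 2(η_j,η_i)/(η_i,η_i)` is a
generalized Cartan matrix of finite or affine type: it is symmetrizable (by the diagonal of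
squared lengths), its symmetrization is positive semi-definite, and of corank at most 1. -/
theorem stmt3 {U : Type*} [AddCommGroup U] [Module ℝ U]
    (B : U →ₗ[ℝ] U →ₗ[ℝ] ℝ)
    (hsymm : ∀ v w : U, B v w = B w v)
    (hpsd : ∀ v : U, 0 ≤ B v v)
    (t : ℕ) (η : Fin (t + 1) → U)
    (hreal : ∀ i, 0 < B (η i) (η i))
    (hcrys : ∀ i j, ∃ n : ℤ, 2 * B (η i) (η j) / B (η i) (η i) = (n : ℝ))
    (horth : ∀ i j : Fin (t + 1), i ≠ j → i ≠ Fin.last t → j ≠ Fin.last t →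
      B (η i) (η j) = 0)
    (hneg : ∀ i : Fin (t + 1), i ≠ Fin.last t → B (η i) (η (Fin.last t)) < 0) :
    (∀ i, (2 * B (η i) (η i) / B (η i) (η i) : ℝ) = 2) ∧
    (∀ i j, i ≠ j → 2 * B (η i) (η j) / B (η i) (η i) ≤ 0) ∧
    (∀ i j, (2 * B (η i) (η j) / B (η i) (η i) = 0 ↔
             2 * B (η j) (η i) / B (η j) (η j) = 0)) ∧
    (∀ i j, B (η i) (η i) * (2 * B (η i) (η j) / B (η i) (η i)) = 2 * B (η i) (η j)) ∧
    (Matrix.of fun i j => B (η i) (η j)).PosSemidef ∧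
    t ≤ (Matrix.of fun i j : Fin (t + 1) => B (η i) (η j)).rank :=
  stmt3_general B hsymm hpsd t η hreal horth hneg
end

section
/- In the root system of type C_n with Φ₁⁺ = {ε_i + ε_j : 1 ≤ i ≤ j ≤ n}, ordered by the dominance order of Φ₀ (generated by ε_i − ε_{i+1}): a pairwise orthogonal subset {ε_{i₁}+ε_{j₁}, …, ε_{i_m}+ε_{j_m}} (with i_k ≤ j_k, all indices i_k, j_k forming disjoint pairs) is an antichain if and only if, up to permutation, i₁ < i₂ < ⋯ < i_m ≤ j_m < j_{m−1} < ⋯ < j₁. Consequently, there is a unique antichain among the maximal orthogonal subsets of Φ₁⁺. -/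
/-!
Sorting the pairs by their first entries, the antichain condition says exactly that the
second entries then decrease.  For a maximal antichain and one of its pairs `(i, j)`, every
point below `i` is the first entry of a pair with smaller first entry, and every point above
`j` is the second entry of a pair with larger second entry; by the antichain condition these
are the same pairs, so `i = n - 1 - j`.  Hence the maximal antichain consists of the pairs
`(a, n - 1 - a)` with `a ≤ n - 1 - a`.
-/

open Finset

def IsPairAntichain {ι α β : Type*} [LE α] [LE β] (f : ι → α) (g : ι → β) : Prop :=
  ∀ k l, k ≠ l → ¬ (f k ≤ f l ∧ g k ≤ g l)

namespace IsPairAntichain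

variable {ι κ α β : Type*} [LinearOrder α] [LinearOrder β] {f : ι → α} {g : ι → β}

theorem lt_iff_lt (h : IsPairAntichain f g) {k l : ι} : f k < f l ↔ g l < g k := by
  constructor
  · intro hf
    by_contra! hg
    exact h k l (ne_of_apply_ne f hf.ne) ⟨hf.le, hg⟩
  · intro hg
    by_contra! hf
    exact h l k (ne_of_apply_ne g hg.ne) ⟨hf, hg.le⟩

theorem comp_equiv (h : IsPairAntichain f g) (e : κ ≃ ι) : IsPairAntichain (f ∘ e) (g ∘ e) :=
  fun k l hne => h (e k) (e l) (e.injective.ne hne)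

end IsPairAntichain

section Sorting

variable {m : ℕ} {α β : Type*} [LinearOrder α] [LinearOrder β] {f : Fin m → α} {g : Fin m → β}

theorem isPairAntichain_of_strictMono_of_strictAnti (hf : StrictMono f) (hg : StrictAnti g) :
    IsPairAntichain f g := fun _ _ hne ⟨hfkl, hgkl⟩ =>
  (hg (lt_of_le_of_ne (hf.le_iff_le.1 hfkl) hne)).not_ge hgkl

theorem isPairAntichain_iff_exists_perm (hf : Function.Injective f) :
    IsPairAntichain f g ↔
      ∃ e : Equiv.Perm (Fin m), StrictMono (fun k => f (e k)) ∧ StrictAnti (fun k => g (e k)) := by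
  constructor
  · intro h
    have hsorted : StrictMono (f ∘ Tuple.sort f) :=
      (Tuple.monotone_sort f).strictMono_of_injective (hf.comp (Tuple.sort f).injective)
    exact ⟨Tuple.sort f, hsorted, fun a b hab => h.lt_iff_lt.1 (hsorted hab)⟩
  · rintro ⟨e, hfe, hge⟩
    simpa [Function.comp_def] using
      (isPairAntichain_of_strictMono_of_strictAnti hfe hge).comp_equiv e.symm

end Sorting

section Covering

variable {ι : Type*} [Fintype ι] {n : ℕ} {I J : ι → Fin n}

theorem image_filter_lt_left (hIJ : ∀ k, I k ≤ J k)
    (hcov : ∀ a, ∃ k, a = I k ∨ a = J k) (h : IsPairAntichain I J) (k : ι) :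
    (univ.filter fun l => I l < I k).image I = Iio (I k) := by
  ext a
  simp only [mem_image, mem_filter, mem_univ, true_and, mem_Iio]
  refine ⟨fun ⟨l, hl, hla⟩ => hla ▸ hl, fun ha => ?_⟩
  obtain ⟨l, rfl | rfl⟩ := hcov a
  · exact ⟨l, ha, rfl⟩
  · have hJ : J l < J k := ha.trans_le (hIJ k)
    exact absurd ((hIJ l).trans_lt ha) (h.lt_iff_lt.2 hJ).not_gt

theorem image_filter_gt_right (hIJ : ∀ k, I k ≤ J k)
    (hcov : ∀ a, ∃ k, a = I k ∨ a = J k) (h : IsPairAntichain I J) (k : ι) :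
    (univ.filter fun l => J k < J l).image J = Ioi (J k) := by
  ext a
  simp only [mem_image, mem_filter, mem_univ, true_and, mem_Ioi]
  refine ⟨fun ⟨l, hl, hla⟩ => hla ▸ hl, fun ha => ?_⟩
  obtain ⟨l, rfl | rfl⟩ := hcov a
  · have hI : I k < I l := (hIJ k).trans_lt ha
    exact absurd (ha.trans_le (hIJ l)) (h.lt_iff_lt.1 hI).not_gt
  · exact ⟨l, ha, rfl⟩

theorem val_left_add_val_right (hI : Function.Injective I)
    (hJ : Function.Injective J) (hIJ : ∀ k, I k ≤ J k) (hcov : ∀ a, ∃ k, a = I k ∨ a = J k)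
    (h : IsPairAntichain I J) (k : ι) : (I k : ℕ) + J k = n - 1 := by
  have hsame : univ.filter (fun l => I l < I k) = univ.filter (fun l => J k < J l) := by
    ext l
    simp only [mem_filter, mem_univ, true_and, h.lt_iff_lt]
  have hcard := congrArg card (image_filter_lt_left hIJ hcov h k)
  rw [card_image_of_injective _ hI, hsame, ← card_image_of_injective _ hJ,
    image_filter_gt_right hIJ hcov h k, Fin.card_Iio, Fin.card_Ioi] at hcard
  omega

theorem setOf_pairs_eq (hI : Function.Injective I) (hJ : Function.Injective J)
    (hIJ : ∀ k, I k ≤ J k) (hcov : ∀ a, ∃ k, a = I k ∨ a = J k) (h : IsPairAntichain I J) :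
    {p : Fin n × Fin n | ∃ k, p = (I k, J k)} =
      {p : Fin n × Fin n | (p.1 : ℕ) + p.2 = n - 1 ∧ p.1 ≤ p.2} := by
  have hsum := val_left_add_val_right hI hJ hIJ hcov h
  ext ⟨a, b⟩
  simp only [Set.mem_ofPred_eq, Prod.mk.injEq]
  constructor
  · rintro ⟨k, rfl, rfl⟩
    exact ⟨hsum k, hIJ k⟩
  · rintro ⟨hab, hle⟩
    obtain ⟨k, rfl | rfl⟩ := hcov a
    · exact ⟨k, rfl, Fin.ext (by have hk := hsum k; omega)⟩
    · -- Here `I k = b`, and `b ≥ a = J k ≥ I k = b` forces `a = b`.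
      have hk := hsum k
      have hIJk := hIJ k
      rw [Fin.le_def] at hle hIJk
      exact ⟨k, Fin.ext (by omega), Fin.ext (by omega)⟩

end Covering

/-- In the root system `C_n`, `Φ₁⁺ = {ε_i + ε_j : 1 ≤ i ≤ j ≤ n}`, with the dominance
order `ε_i + ε_j ≤ ε_h + ε_k ↔ h ≤ i ∧ k ≤ j`.  An orthogonal subset of `Φ₁⁺` is encoded
by `m` pairwise disjoint pairs `(I k, J k)` with `I k ≤ J k`.

(1) Such an orthogonal subset is an antichain if and only if, up to a permutation of the
pairs, `I` is strictly increasing and `J` is strictly decreasing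
(`i₁ < ⋯ < i_m ≤ j_m < ⋯ < j₁`).

(2) Consequently, among the maximal orthogonal subsets (those whose pairs cover all of
`{1,…,n}`) there is a unique antichain. -/
theorem stmt6 (n : ℕ) :
    (∀ (m : ℕ) (I J : Fin m → Fin n),
      (∀ k, I k ≤ J k) →
      (∀ k l, k ≠ l → I k ≠ I l ∧ I k ≠ J l ∧ J k ≠ J l) →
      ((∀ k l, k ≠ l → ¬ (I k ≤ I l ∧ J k ≤ J l)) ↔
        ∃ e : Equiv.Perm (Fin m),
          StrictMono (fun k => I (e k)) ∧ StrictAnti (fun k => J (e k))))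
    ∧
    (∀ (m m' : ℕ) (I J : Fin m → Fin n) (I' J' : Fin m' → Fin n),
      (∀ k, I k ≤ J k) → (∀ k, I' k ≤ J' k) →
      (∀ k l, k ≠ l → I k ≠ I l ∧ I k ≠ J l ∧ J k ≠ J l) →
      (∀ k l, k ≠ l → I' k ≠ I' l ∧ I' k ≠ J' l ∧ J' k ≠ J' l) →
      (∀ a : Fin n, ∃ k, a = I k ∨ a = J k) →
      (∀ a : Fin n, ∃ k, a = I' k ∨ a = J' k) →
      (∀ k l, k ≠ l → ¬ (I k ≤ I l ∧ J k ≤ J l)) →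
      (∀ k l, k ≠ l → ¬ (I' k ≤ I' l ∧ J' k ≤ J' l)) →
      {p : Fin n × Fin n | ∃ k, p = (I k, J k)} =
        {p : Fin n × Fin n | ∃ k, p = (I' k, J' k)}) := by
  have injective_left {m : ℕ} {I J : Fin m → Fin n}
      (hdisj : ∀ k l, k ≠ l → I k ≠ I l ∧ I k ≠ J l ∧ J k ≠ J l) : Function.Injective I :=
    Function.injective_iff_pairwise_ne.2 fun k l hne => (hdisj k l hne).1
  have injective_right {m : ℕ} {I J : Fin m → Fin n}
      (hdisj : ∀ k l, k ≠ l → I k ≠ I l ∧ I k ≠ J l ∧ J k ≠ J l) : Function.Injective J :=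
    Function.injective_iff_pairwise_ne.2 fun k l hne => (hdisj k l hne).2.2
  refine ⟨fun m I J _ hdisj => isPairAntichain_iff_exists_perm (injective_left hdisj), ?_⟩
  intro m m' I J I' J' hIJ hIJ' hdisj hdisj' hcov hcov' hanti hanti'
  rw [setOf_pairs_eq (injective_left hdisj) (injective_right hdisj) hIJ hcov hanti,
    setOf_pairs_eq (injective_left hdisj') (injective_right hdisj') hIJ' hcov' hanti']
end

section
/- Let σ be a Hermitian involution of tube type of a simple Lie algebra g, with set of Harish-Chandra strongly orthogonal roots γ₁,…,γ_r in Φ₁⁺. If Φ is not simply laced, S ⊂ Φ₁⁺ is an orthogonal subset of maximal cardinality (consisting of long roots), and β ∈ Φ₁⁺ is a short root, then β = ½(γ + γ′) for two distinct elements γ, γ′ of S (after choosing positivity so that S is the Harish-Chandra set). -/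
open scoped RealInnerProductSpace

/-- Hermitian involution of tube type, non-simply-laced case: let `S` be a maximal
orthogonal subset of `Φ₁⁺` consisting of long roots (common squared length `L`), and let
`β ∈ Φ₁⁺` be a short root (squared length `L/2`).  By the tube-type condition, the
restriction of `β` to the span of `S` is `½(γ + γ')` for some `γ, γ' ∈ S` (possibly
equal), i.e. `β = ½(γ + γ') + λ` with `λ` orthogonal to every element of `S`.  Then in
fact `λ = 0` and `γ ≠ γ'`, i.e. `β = ½(γ + γ')` for two distinct elements of `S`. -/
theorem stmt9 {V : Type*} [NormedAddCommGroup V] [InnerProductSpace ℝ V]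
    (S : Finset V) (L : ℝ) (hL : 0 < L)
    (hSorth : ∀ γ ∈ S, ∀ γ' ∈ S, γ ≠ γ' → ⟪γ, γ'⟫ = 0)
    (hlong : ∀ γ ∈ S, ⟪γ, γ⟫ = L)
    (β : V) (hshort : ⟪β, β⟫ = L / 2)
    (γ γ' : V) (hγ : γ ∈ S) (hγ' : γ' ∈ S)
    (lam : V) (hdec : β = (1 / 2 : ℝ) • (γ + γ') + lam)
    (hlam : ∀ δ ∈ S, ⟪lam, δ⟫ = 0) :
    lam = 0 ∧ γ ≠ γ' := by
  have hgg := hlong γ hγ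
  have hg'g' := hlong γ' hγ'
  have hlg := hlam γ hγ
  have hlg' := hlam γ' hγ'
  have hexp : ⟪β, β⟫ = (1/4 : ℝ) * (⟪γ,γ⟫ + ⟪γ,γ'⟫ + (⟪γ',γ⟫ + ⟪γ',γ'⟫)) + ⟪lam, lam⟫ := by
    rw [hdec]
    rw [real_inner_add_add_self, real_inner_smul_left, real_inner_smul_right,
      real_inner_smul_left, inner_add_add_self]
    have h1 : ⟪γ + γ', lam⟫ = 0 := by
      rw [real_inner_comm, inner_add_right, hlg, hlg']; ring
    rw [h1]
    ring
  rw [hshort, hgg, hg'g'] at hexp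
  by_cases h : γ = γ'
  · exfalso
    subst h
    have : ⟪γ, γ⟫ = L := hgg
    rw [this] at hexp
    have hnn : (0:ℝ) ≤ ⟪lam, lam⟫ := real_inner_self_nonneg
    nlinarith
  · have h0 : ⟪γ, γ'⟫ = 0 := hSorth γ hγ γ' hγ' h
    have h0' : ⟪γ', γ⟫ = 0 := by rw [real_inner_comm]; exact h0
    rw [h0, h0'] at hexp
    have : ⟪lam, lam⟫ = 0 := by linarith
    exact ⟨inner_self_eq_zero.mp this, h⟩
end

section
/- Let A and A′ be two antichains in Φ₁⁺ (with respect to ≤₀) which are both maximal-cardinality orthogonal subsets, in a tube-type Hermitian pair, and suppose Σ_{γ∈A} γ = Σ_{γ′∈A′} γ′. Then A = A′. (Key step: in the bipartite incidence graph of the nonzero-pairing relation between A and A′, every connected component with more than one node must be a cycle alternating between A and A′ with every node of degree 2, and then λ = Σ_{γ_i} − Σ_{γ′_i} has ‖λ‖² = 0, forcing components to be single common roots.) -/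
open scoped RealInnerProductSpace

/-- The dominance order defined by `pos0`: `lam ≤₀ mu` iff `mu - lam ∈ ℕ⬝pos0`. -/
def NDom {V : Type*} [AddCommGroup V] (pos0 : Set V) (lam mu : V) : Prop :=
  ∃ l : List V, (∀ γ ∈ l, γ ∈ pos0) ∧ mu - lam = l.sum

/-- A pairwise orthogonal finite subset of a set `pos1`. -/
def IsOrthSubset {V : Type*} [NormedAddCommGroup V] [InnerProductSpace ℝ V]
    (pos1 : Set V) (S : Finset V) : Prop :=
  ↑S ⊆ pos1 ∧ ∀ α ∈ S, ∀ β ∈ S, α ≠ β → ⟪α, β⟫ = 0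

/-- An orthogonal subset of maximal cardinality. -/
def IsMaxOrthSubset {V : Type*} [NormedAddCommGroup V] [InnerProductSpace ℝ V]
    (pos1 : Set V) (S : Finset V) : Prop :=
  IsOrthSubset pos1 S ∧ ∀ T : Finset V, IsOrthSubset pos1 T → T.card ≤ S.card

/-- An antichain for the dominance order of `pos0`. -/
def IsAntichainDom {V : Type*} [AddCommGroup V] (pos0 : Set V) (S : Finset V) : Prop :=
  ∀ a ∈ S, ∀ a' ∈ S, a ≠ a' → ¬ NDom pos0 a a'

/-!
Put `B = A \ A'` and `B' = A' \ A`: orthogonal families of roots of squared length `L` with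
equal sums, so `⟪γ, ∑ B'⟫ = L` for `γ ∈ B`, and crystallography leaves `⟪γ, γ'⟫ ∈ {0, L/2}`.
For an edge (`⟪γ, γ'⟫ = L/2`) the difference `γ' - γ` is a root with `f = 0`, hence lies in
`pos0` or `-pos0`, and the antichain conditions force all edges at a vertex to point the same
way. The vertices `S ⊆ B`, `T ⊆ B'` met by an upward edge form a union of components, so
orthogonality gives `∑ S = ∑ T`, and then the sum of `γ' - γ` over the edges of `S × T` is
`2 (∑ T - ∑ S) = 0`: a vanishing nonempty sum of positive roots. Hence there are no upward
edges, by symmetry no downward ones either, and so no edges at all, which contradicts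
`⟪γ, ∑ B'⟫ = L > 0` unless `B = ∅`.
-/

section ZeroSumFree

variable {V : Type*} [AddCommGroup V]

def IsZeroSumFree (P : Set V) : Prop :=
  ∀ m : Multiset V, m ≠ 0 → (∀ x ∈ m, x ∈ P) → m.sum ≠ 0

theorem IsZeroSumFree.mono {P Q : Set V} (hQ : IsZeroSumFree Q) (hPQ : P ⊆ Q) :
    IsZeroSumFree P :=
  fun m hm hmP => hQ m hm fun x hx => hPQ (hmP x hx)

theorem IsZeroSumFree.neg_notMem {P : Set V} (hP : IsZeroSumFree P) {p : V} (hp : p ∈ P) :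
    -p ∉ P :=
  fun hnp => hP {p, -p} (by simp) (by simp [hp, hnp]) (by simp)

theorem IsAntichainDom.eq_of_sub_mem {P : Set V} {C : Finset V} (hC : IsAntichainDom P C)
    {x y y' : V} (hy : y ∈ C) (hy' : y' ∈ C) (h : y - x ∈ P) (h' : x - y' ∈ P) : y = y' := by
  by_contra hne
  refine hC y' hy' y hy (Ne.symm hne) ⟨[y - x, x - y'], ?_, by simp⟩
  simp [h, h']

end ZeroSumFree

section InnerProduct

variable {V : Type*} [NormedAddCommGroup V] [InnerProductSpace ℝ V]

theorem eq_of_add_eq_add_of_inner_eq_zero {x y x' y' : V} (h : x + y = x' + y')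
    (hxy : ⟪x, y⟫ = 0) (hx'y' : ⟪x', y'⟫ = 0) (hxy' : ⟪x, y'⟫ = 0) (hx'y : ⟪x', y⟫ = 0) :
    x = x' := by
  have hd : x - x' = y' - y := by rw [sub_eq_sub_iff_add_eq_add, add_comm y', h]
  have h0 : ⟪x - x', x - x'⟫ = 0 := by
    nth_rw 2 [hd]
    simp only [inner_sub_left, inner_sub_right, hxy, hx'y', hxy', hx'y, sub_self]
  exact sub_eq_zero.1 (inner_self_eq_zero.1 h0)

theorem inner_sum_eq_inner_self_of_pairwise {S : Finset V}
    (hS : (S : Set V).Pairwise fun x y => ⟪x, y⟫ = 0) {x : V} (hx : x ∈ S) :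
    ⟪x, ∑ y ∈ S, y⟫ = ⟪x, x⟫ := by
  rw [inner_sum, Finset.sum_eq_single x (fun y hy hyx => hS hx hy (Ne.symm hyx)) (absurd hx)]

theorem inner_sum_sum_eq_zero {S T : Finset V} (h : ∀ x ∈ S, ∀ y ∈ T, ⟪x, y⟫ = 0) :
    ⟪∑ x ∈ S, x, ∑ y ∈ T, y⟫ = 0 := by
  rw [sum_inner]
  exact Finset.sum_eq_zero fun x hx => by rw [inner_sum]; exact Finset.sum_eq_zero (h x hx)

theorem exists_mem_inner_neg_of_add_sum_eq_zero {a : V} (ha : a ≠ 0) {t : Multiset V}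
    (h : a + t.sum = 0) : ∃ y ∈ t, ⟪a, y⟫ < 0 := by
  by_contra! hnonneg
  have hsum : ⟪a, t.sum⟫ = (t.map fun y => ⟪a, y⟫).sum := map_multiset_sum (innerₛₗ ℝ a) t
  have hnonneg' : 0 ≤ ⟪a, t.sum⟫ := hsum ▸ Multiset.sum_nonneg fun z hz => by
    obtain ⟨y, hy, rfl⟩ := Multiset.mem_map.1 hz
    exact hnonneg y hy
  rw [← neg_eq_iff_add_eq_zero.2 h, inner_neg_right] at hnonneg'
  exact ha (real_inner_self_nonpos.1 (by linarith))

end InnerProduct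

namespace IsRootSystem

variable {V : Type*} [NormedAddCommGroup V] [InnerProductSpace ℝ V] {Φ : Set V} {α β : V}

theorem inner_self_le_neg_inner_of_add_notMem (hΦ : IsRootSystem Φ) (hα : α ∈ Φ) (hβ : β ∈ Φ)
    (hneg : ⟪α, β⟫ < 0) (hadd : α + β ∉ Φ) : ⟪α, α⟫ ≤ -⟪α, β⟫ := by
  obtain ⟨n, hn⟩ := hΦ.crystallographic α hα β hβ
  have hrefl := hΦ.reflect_mem α hα β hβ
  rw [hn] at hrefl
  rw [real_inner_comm] at hn
  have hαα : 0 < ⟪α, α⟫ := real_inner_self_pos.2 (hΦ.ne_zero α hα)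
  have hn1 : n ≠ -1 := by
    rintro rfl
    apply hadd
    simpa [add_comm] using hrefl
  have hn0 : n < 0 := by
    have : (n : ℝ) < 0 := hn ▸ div_neg_of_neg_of_pos (by linarith) hαα
    exact_mod_cast this
  have hn2 : (n : ℝ) ≤ -2 := by exact_mod_cast (by omega : n ≤ -2)
  rw [← hn, div_le_iff₀ hαα] at hn2
  linarith

theorem add_mem_of_inner_neg (hΦ : IsRootSystem Φ) (hα : α ∈ Φ) (hβ : β ∈ Φ)
    (hneg : ⟪α, β⟫ < 0) (hne : α + β ≠ 0) : α + β ∈ Φ := by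
  by_contra hadd
  have hα' := hΦ.inner_self_le_neg_inner_of_add_notMem hα hβ hneg hadd
  have hβ' := hΦ.inner_self_le_neg_inner_of_add_notMem hβ hα (by rwa [real_inner_comm])
    (by rwa [add_comm])
  rw [real_inner_comm α β] at hβ'
  exact hne (real_inner_self_nonpos.1 (by rw [real_inner_add_add_self]; linarith))

theorem inner_eq_zero_or_half {L : ℝ} (hΦ : IsRootSystem Φ) (hα : α ∈ Φ) (hβ : β ∈ Φ)
    (hαα : ⟪α, α⟫ = L) (hββ : ⟪β, β⟫ = L) (hne : α ≠ β) (hnonneg : 0 ≤ ⟪α, β⟫) :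
    ⟪α, β⟫ = 0 ∨ ⟪α, β⟫ = L / 2 := by
  obtain ⟨n, hn⟩ := hΦ.crystallographic α hα β hβ
  have hL : 0 < L := hαα ▸ real_inner_self_pos.2 (hΦ.ne_zero α hα)
  rw [real_inner_comm, hαα, div_eq_iff hL.ne'] at hn
  have hn0 : 0 ≤ n := by
    have : (0 : ℝ) ≤ n := by nlinarith
    exact_mod_cast this
  have hn2 : n < 2 := by
    by_contra! h2
    have : (2 : ℝ) ≤ n := by exact_mod_cast h2
    apply hne
    rw [← sub_eq_zero, ← real_inner_self_nonpos, real_inner_sub_sub_self, hαα, hββ]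
    nlinarith
  interval_cases n
  · left; push_cast at hn; linarith
  · right; push_cast at hn; linarith

theorem sub_mem_of_two_mul_inner_eq (hΦ : IsRootSystem Φ) (hα : α ∈ Φ) (hβ : β ∈ Φ)
    (h : 2 * ⟪α, β⟫ = ⟪α, α⟫) : β - α ∈ Φ := by
  have hαα : ⟪α, α⟫ ≠ 0 := (real_inner_self_pos.2 (hΦ.ne_zero α hα)).ne'
  have hrefl := hΦ.reflect_mem α hα β hβ
  rwa [real_inner_comm α β, h, div_self hαα, one_smul] at hrefl

end IsRootSystem

namespace IsPositiveSystem

variable {V : Type*} [NormedAddCommGroup V] [InnerProductSpace ℝ V] {Φ pos : Set V}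

theorem isZeroSumFree (hΦ : IsRootSystem Φ) (hpos : IsPositiveSystem Φ pos) :
    IsZeroSumFree pos := by
  classical
  intro m hm hmpos
  induction hc : Multiset.card m using Nat.strong_induction_on generalizing m with
  | _ n ih =>
    intro hsum
    obtain ⟨a, ha⟩ := Multiset.exists_mem_of_ne_zero hm
    obtain ⟨t, rfl⟩ := Multiset.exists_cons_of_mem ha
    have hapos := hmpos a ha
    obtain ⟨y, hy, hay⟩ := exists_mem_inner_neg_of_add_sum_eq_zero
      (hΦ.ne_zero a (hpos.subset hapos)) (by rwa [Multiset.sum_cons] at hsum)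
    have hypos := hmpos y (Multiset.mem_cons_of_mem hy)
    have hne : a + y ≠ 0 := fun h0 =>
      hpos.not_both a hapos (eq_neg_of_add_eq_zero_right h0 ▸ hypos)
    have hay_pos : a + y ∈ pos := hpos.add_mem a hapos y hypos
      (hΦ.add_mem_of_inner_neg (hpos.subset hapos) (hpos.subset hypos) hay hne)
    -- replacing `a` and `y` by the positive root `a + y` gives a shorter counterexample
    refine ih (Multiset.card t) (by simp [← hc]) ((a + y) ::ₘ t.erase y)
      Multiset.cons_ne_zero ?_ ?_ ?_
    · intro x hx
      rcases Multiset.mem_cons.1 hx with rfl | hx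
      · exact hay_pos
      · exact hmpos x (Multiset.mem_cons_of_mem (Multiset.mem_of_mem_erase hx))
    · rw [Multiset.card_cons, Multiset.card_erase_add_one hy]
    · rw [Multiset.sum_cons, add_assoc, ← Multiset.sum_cons, Multiset.cons_erase hy, ← hsum,
        Multiset.sum_cons]

theorem sub_mem_or_sub_mem (hpos : IsPositiveSystem Φ pos) {f : V →ₗ[ℝ] ℝ} {α β : V}
    (h : β - α ∈ Φ) (hf : f α = f β) :
    β - α ∈ {x ∈ pos | f x = 0} ∨ α - β ∈ {x ∈ pos | f x = 0} := by
  rcases hpos.mem_or_neg_mem _ h with h | h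
  · exact Or.inl ⟨h, by simp [hf]⟩
  · exact Or.inr ⟨by rwa [neg_sub] at h, by simp [hf]⟩

end IsPositiveSystem

structure IsBalancedPair {V : Type*} [NormedAddCommGroup V] [InnerProductSpace ℝ V]
    (P : Set V) (L : ℝ) (B B' : Finset V) : Prop where
  pairwise_left : (B : Set V).Pairwise fun x y => ⟪x, y⟫ = 0
  pairwise_right : (B' : Set V).Pairwise fun x y => ⟪x, y⟫ = 0
  inner_self_left : ∀ γ ∈ B, ⟪γ, γ⟫ = L
  inner_self_right : ∀ γ ∈ B', ⟪γ, γ⟫ = L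
  sum_eq : ∑ γ ∈ B, γ = ∑ γ ∈ B', γ
  inner_eq : ∀ γ ∈ B, ∀ γ' ∈ B', ⟪γ, γ'⟫ = 0 ∨ ⟪γ, γ'⟫ = L / 2
  sub_mem : ∀ γ ∈ B, ∀ γ' ∈ B', ⟪γ, γ'⟫ ≠ 0 → γ' - γ ∈ P ∨ γ - γ' ∈ P
  antichain_left : IsAntichainDom P B
  antichain_right : IsAntichainDom P B'

namespace IsBalancedPair

variable {V : Type*} [NormedAddCommGroup V] [InnerProductSpace ℝ V] {P : Set V} {L : ℝ}
  {B B' S T : Finset V}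

theorem symm (h : IsBalancedPair P L B B') : IsBalancedPair P L B' B where
  pairwise_left := h.pairwise_right
  pairwise_right := h.pairwise_left
  inner_self_left := h.inner_self_right
  inner_self_right := h.inner_self_left
  sum_eq := h.sum_eq.symm
  inner_eq γ' hγ' γ hγ := by rw [real_inner_comm]; exact h.inner_eq γ hγ γ' hγ'
  sub_mem γ' hγ' γ hγ hne :=
    (h.sub_mem γ hγ γ' hγ' (by rwa [real_inner_comm])).symm
  antichain_left := h.antichain_right
  antichain_right := h.antichain_left

theorem inner_sum_right (h : IsBalancedPair P L B B') {γ : V} (hγ : γ ∈ B) :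
    ⟪γ, ∑ γ' ∈ B', γ'⟫ = L := by
  rw [← h.sum_eq, inner_sum_eq_inner_self_of_pairwise h.pairwise_left hγ, h.inner_self_left γ hγ]

theorem inner_sum_right_of_subset (h : IsBalancedPair P L B B') (hT : T ⊆ B') {γ : V}
    (hγ : γ ∈ B) (hγT : ∀ γ' ∈ B', γ' ∉ T → ⟪γ, γ'⟫ = 0) : ⟪γ, ∑ γ' ∈ T, γ'⟫ = L := by
  classical
  have h0 : ⟪γ, ∑ γ' ∈ B' \ T, γ'⟫ = 0 := by
    rw [inner_sum]
    exact Finset.sum_eq_zero fun γ' hγ' =>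
      hγT γ' (Finset.sdiff_subset hγ') (Finset.mem_sdiff.1 hγ').2
  rw [← h.inner_sum_right hγ, ← Finset.sum_sdiff hT, inner_add_right, h0, zero_add]

theorem sum_eq_of_closed (h : IsBalancedPair P L B B') (hS : S ⊆ B) (hT : T ⊆ B')
    (hST : ∀ γ ∈ S, ∀ γ' ∈ B', γ' ∉ T → ⟪γ, γ'⟫ = 0)
    (hTS : ∀ γ ∈ B, γ ∉ S → ∀ γ' ∈ T, ⟪γ, γ'⟫ = 0) :
    ∑ γ ∈ S, γ = ∑ γ' ∈ T, γ' := by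
  classical
  refine eq_of_add_eq_add_of_inner_eq_zero (y := ∑ γ ∈ B \ S, γ) (y' := ∑ γ' ∈ B' \ T, γ')
    ?_ ?_ ?_ ?_ ?_
  · rw [add_comm, Finset.sum_sdiff hS, add_comm, Finset.sum_sdiff hT, h.sum_eq]
  · refine inner_sum_sum_eq_zero fun x hx y hy => ?_
    obtain ⟨hyB, hyS⟩ := Finset.mem_sdiff.1 hy
    exact h.pairwise_left (hS hx) hyB fun hxy => hyS (hxy ▸ hx)
  · refine inner_sum_sum_eq_zero fun x hx y hy => ?_
    obtain ⟨hyB', hyT⟩ := Finset.mem_sdiff.1 hy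
    exact h.pairwise_right (hT hx) hyB' fun hxy => hyT (hxy ▸ hx)
  · refine inner_sum_sum_eq_zero fun x hx y hy => ?_
    obtain ⟨hyB', hyT⟩ := Finset.mem_sdiff.1 hy
    exact hST x hx y hyB' hyT
  · rw [real_inner_comm]
    refine inner_sum_sum_eq_zero fun x hx y hy => ?_
    obtain ⟨hxB, hxS⟩ := Finset.mem_sdiff.1 hx
    exact hTS x hxB hxS y hy

theorem sum_inner_smul_sub_eq_zero (h : IsBalancedPair P L B B') (hS : S ⊆ B) (hT : T ⊆ B')
    (hST : ∀ γ ∈ S, ∀ γ' ∈ B', γ' ∉ T → ⟪γ, γ'⟫ = 0)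
    (hTS : ∀ γ ∈ B, γ ∉ S → ∀ γ' ∈ T, ⟪γ, γ'⟫ = 0) :
    ∑ p ∈ S ×ˢ T, ⟪p.1, p.2⟫ • (p.2 - p.1) = 0 := by
  have hrow : ∀ γ ∈ S, ⟪γ, ∑ γ' ∈ T, γ'⟫ = L := fun γ hγ =>
    h.inner_sum_right_of_subset hT (hS hγ) (hST γ hγ)
  have hcol : ∀ γ' ∈ T, ⟪∑ γ ∈ S, γ, γ'⟫ = L := fun γ' hγ' => by
    rw [real_inner_comm]
    exact h.symm.inner_sum_right_of_subset hS (hT hγ') fun γ hγ hγS => by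
      rw [real_inner_comm]; exact hTS γ hγ hγS γ' hγ'
  calc ∑ p ∈ S ×ˢ T, ⟪p.1, p.2⟫ • (p.2 - p.1)
      = ∑ γ' ∈ T, ⟪∑ γ ∈ S, γ, γ'⟫ • γ' - ∑ γ ∈ S, ⟪γ, ∑ γ' ∈ T, γ'⟫ • γ := by
        simp only [smul_sub, Finset.sum_sub_distrib]
        rw [Finset.sum_product_right, Finset.sum_product]
        simp only [sum_inner, inner_sum, Finset.sum_smul]
    _ = L • (∑ γ' ∈ T, γ' - ∑ γ ∈ S, γ) := by
        rw [smul_sub, Finset.smul_sum, Finset.smul_sum]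
        congr 1
        exacts [Finset.sum_congr rfl fun γ' hγ' => by rw [hcol γ' hγ'],
          Finset.sum_congr rfl fun γ hγ => by rw [hrow γ hγ]]
    _ = 0 := by rw [h.sum_eq_of_closed hS hT hST hTS, sub_self, smul_zero]

theorem inner_eq_zero_of_closed (h : IsBalancedPair P L B B') (hP : IsZeroSumFree P)
    (hS : S ⊆ B) (hT : T ⊆ B')
    (hST : ∀ γ ∈ S, ∀ γ' ∈ B', γ' ∉ T → ⟪γ, γ'⟫ = 0)
    (hTS : ∀ γ ∈ B, γ ∉ S → ∀ γ' ∈ T, ⟪γ, γ'⟫ = 0)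
    (hup : ∀ γ ∈ S, ∀ γ' ∈ T, ⟪γ, γ'⟫ ≠ 0 → γ' - γ ∈ P) {γ γ' : V} (hγ : γ ∈ S)
    (hγ' : γ' ∈ T) : ⟪γ, γ'⟫ = 0 := by
  classical
  by_contra hne
  set E := (S ×ˢ T).filter fun p => ⟪p.1, p.2⟫ ≠ 0
  have hL : L / 2 ≠ 0 := by
    rwa [← (h.inner_eq γ (hS hγ) γ' (hT hγ')).resolve_left hne]
  have hE : (L / 2) • ∑ p ∈ E, (p.2 - p.1) = 0 := calc
    _ = ∑ p ∈ E, ⟪p.1, p.2⟫ • (p.2 - p.1) := by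
      rw [Finset.smul_sum]
      refine Finset.sum_congr rfl fun p hp => ?_
      obtain ⟨hp, hpE⟩ := Finset.mem_filter.1 hp
      obtain ⟨hp1, hp2⟩ := Finset.mem_product.1 hp
      rw [(h.inner_eq p.1 (hS hp1) p.2 (hT hp2)).resolve_left hpE]
    _ = ∑ p ∈ S ×ˢ T, ⟪p.1, p.2⟫ • (p.2 - p.1) :=
      Finset.sum_filter_of_ne fun p _ hp => left_ne_zero_of_smul hp
    _ = 0 := h.sum_inner_smul_sub_eq_zero hS hT hST hTS
  refine hP (E.val.map fun p => p.2 - p.1) ?_ ?_ ?_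
  · rw [Ne, Multiset.map_eq_zero, Finset.val_eq_zero, ← Ne, ← Finset.nonempty_iff_ne_empty]
    exact ⟨(γ, γ'), by simp [E, hγ, hγ', hne]⟩
  · intro x hx
    obtain ⟨p, hp, rfl⟩ := Multiset.mem_map.1 hx
    obtain ⟨hp, hpE⟩ := Finset.mem_filter.1 hp
    obtain ⟨hp1, hp2⟩ := Finset.mem_product.1 hp
    exact hup p.1 hp1 p.2 hp2 hpE
  · rw [← Finset.sum_eq_multiset_sum]
    exact (smul_eq_zero.1 hE).resolve_left hL

theorem sub_mem_of_inner_ne_zero (h : IsBalancedPair P L B B') (hP : IsZeroSumFree P)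
    {γ γ' : V} (hγ : γ ∈ B) (hγ' : γ' ∈ B') (hne : ⟪γ, γ'⟫ ≠ 0) : γ - γ' ∈ P := by
  classical
  by_contra hdown
  -- the vertices met by an upward edge; by the antichain conditions no edge leaves `S ∪ T`
  set S := B.filter fun x => ∃ y ∈ B', ⟪x, y⟫ ≠ 0 ∧ y - x ∈ P
  set T := B'.filter fun y => ∃ x ∈ B, ⟪x, y⟫ ≠ 0 ∧ y - x ∈ P
  have hup : ∀ x ∈ S, ∀ y ∈ B', ⟪x, y⟫ ≠ 0 → y - x ∈ P := by
    intro x hx y hy hxy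
    obtain ⟨hxB, y₀, hy₀, -, hy₀x⟩ := Finset.mem_filter.1 hx
    refine (h.sub_mem x hxB y hy hxy).resolve_right fun hxy' => ?_
    obtain rfl := h.antichain_right.eq_of_sub_mem hy₀ hy hy₀x hxy'
    exact hP.neg_notMem hy₀x (by rw [neg_sub]; exact hxy')
  have hST : ∀ x ∈ S, ∀ y ∈ B', y ∉ T → ⟪x, y⟫ = 0 := fun x hx y hy hyT => by
    by_contra hxy
    exact hyT (Finset.mem_filter.2 ⟨hy, x, (Finset.mem_filter.1 hx).1, hxy, hup x hx y hy hxy⟩)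
  have hTS : ∀ x ∈ B, x ∉ S → ∀ y ∈ T, ⟪x, y⟫ = 0 := fun x hx hxS y hy => by
    by_contra hxy
    obtain ⟨hyB', x₀, hx₀, hx₀y, hyx₀⟩ := Finset.mem_filter.1 hy
    have hxy' : x - y ∈ P := (h.sub_mem x hx y hyB' hxy).resolve_left fun hyx =>
      hxS (Finset.mem_filter.2 ⟨hx, y, hyB', hxy, hyx⟩)
    obtain rfl := h.antichain_left.eq_of_sub_mem hx hx₀ hxy' hyx₀
    exact hxS (Finset.mem_filter.2 ⟨hx, y, hyB', hx₀y, hyx₀⟩)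
  have hγ'γ : γ' - γ ∈ P := (h.sub_mem γ hγ γ' hγ' hne).resolve_right hdown
  exact hne (h.inner_eq_zero_of_closed hP (Finset.filter_subset _ _) (Finset.filter_subset _ _)
    hST hTS (fun x hx y hy => hup x hx y (Finset.mem_filter.1 hy).1)
    (Finset.mem_filter.2 ⟨hγ, γ', hγ', hne, hγ'γ⟩) (Finset.mem_filter.2 ⟨hγ', γ, hγ, hne, hγ'γ⟩))

theorem left_eq_empty (h : IsBalancedPair P L B B') (hP : IsZeroSumFree P) (hL : 0 < L) :
    B = ∅ := by
  refine Finset.eq_empty_iff_forall_notMem.2 fun γ hγ => ?_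
  obtain ⟨γ', hγ', hne⟩ : ∃ γ' ∈ B', ⟪γ, γ'⟫ ≠ 0 := by
    by_contra! h0
    have hrow := h.inner_sum_right hγ
    rw [inner_sum, Finset.sum_eq_zero h0] at hrow
    exact hL.ne hrow
  have hdown := h.sub_mem_of_inner_ne_zero hP hγ hγ' hne
  have hup := h.symm.sub_mem_of_inner_ne_zero hP hγ' hγ (by rwa [real_inner_comm])
  exact hP.neg_notMem hdown (by rw [neg_sub]; exact hup)

end IsBalancedPair

theorem isBalancedPair_sdiff {V : Type*} [NormedAddCommGroup V] [InnerProductSpace ℝ V]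
    [DecidableEq V] {Φ pos : Set V} (hΦ : IsRootSystem Φ)
    (hpos : IsPositiveSystem Φ pos) {f : V →ₗ[ℝ] ℝ} {A A' : Finset V} {L : ℝ}
    (hA : IsOrthSubset {β ∈ pos | f β = 1} A) (hA' : IsOrthSubset {β ∈ pos | f β = 1} A')
    (hantiA : IsAntichainDom {β ∈ pos | f β = 0} A)
    (hantiA' : IsAntichainDom {β ∈ pos | f β = 0} A')
    (hlongA : ∀ γ ∈ A, ⟪γ, γ⟫ = L) (hlongA' : ∀ γ' ∈ A', ⟪γ', γ'⟫ = L)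
    (hnonneg : ∀ γ ∈ A, ∀ γ' ∈ A', 0 ≤ ⟪γ, γ'⟫) (hsum : ∑ γ ∈ A, γ = ∑ γ' ∈ A', γ') :
    IsBalancedPair {β ∈ pos | f β = 0} L (A \ A') (A' \ A) := by
  have hpair : ∀ γ ∈ A \ A', ∀ γ' ∈ A' \ A, ⟪γ, γ'⟫ = 0 ∨ ⟪γ, γ'⟫ = L / 2 := by
    intro γ hγ γ' hγ'
    obtain ⟨hγA, hγA'⟩ := Finset.mem_sdiff.1 hγ
    obtain ⟨hγ'A', -⟩ := Finset.mem_sdiff.1 hγ'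
    exact hΦ.inner_eq_zero_or_half (hpos.subset (hA.1 hγA).1) (hpos.subset (hA'.1 hγ'A').1)
      (hlongA γ hγA) (hlongA' γ' hγ'A') (fun h => hγA' (h ▸ hγ'A')) (hnonneg γ hγA γ' hγ'A')
  refine ⟨fun x hx y hy => hA.2 x (Finset.mem_sdiff.1 hx).1 y (Finset.mem_sdiff.1 hy).1,
    fun x hx y hy => hA'.2 x (Finset.mem_sdiff.1 hx).1 y (Finset.mem_sdiff.1 hy).1,
    fun γ hγ => hlongA γ (Finset.mem_sdiff.1 hγ).1, fun γ hγ => hlongA' γ (Finset.mem_sdiff.1 hγ).1,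
    Finset.sum_sdiff_eq_sum_sdiff_iff.2 hsum, hpair, fun γ hγ γ' hγ' hne => ?_,
    fun a ha a' ha' => hantiA a (Finset.mem_sdiff.1 ha).1 a' (Finset.mem_sdiff.1 ha').1,
    fun a ha a' ha' => hantiA' a (Finset.mem_sdiff.1 ha).1 a' (Finset.mem_sdiff.1 ha').1⟩
  have hγ₁ := hA.1 (Finset.mem_sdiff.1 hγ).1
  have hγ'₁ := hA'.1 (Finset.mem_sdiff.1 hγ').1
  refine hpos.sub_mem_or_sub_mem (hΦ.sub_mem_of_two_mul_inner_eq (hpos.subset hγ₁.1)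
    (hpos.subset hγ'₁.1) ?_) (hγ₁.2.trans hγ'₁.2.symm)
  rw [(hpair γ hγ γ' hγ').resolve_left hne, hlongA γ (Finset.mem_sdiff.1 hγ).1]
  ring

theorem stmt11_general {V : Type*} [NormedAddCommGroup V] [InnerProductSpace ℝ V]
    (Φ pos : Set V) (hΦ : IsRootSystem Φ) (hpos : IsPositiveSystem Φ pos)
    (f : V →ₗ[ℝ] ℝ)
    (pos0 pos1 : Set V)
    (hpos0 : pos0 = {β ∈ pos | f β = 0})
    (hpos1 : pos1 = {β ∈ pos | f β = 1})
    (A A' : Finset V) (L : ℝ) (hL : 0 < L)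
    (hmaxA : IsMaxOrthSubset pos1 A) (hmaxA' : IsMaxOrthSubset pos1 A')
    (hantiA : IsAntichainDom pos0 A) (hantiA' : IsAntichainDom pos0 A')
    (hlongA : ∀ γ ∈ A, ⟪γ, γ⟫ = L) (hlongA' : ∀ γ' ∈ A', ⟪γ', γ'⟫ = L)
    (hnonneg : ∀ γ ∈ A, ∀ γ' ∈ A', 0 ≤ ⟪γ, γ'⟫)
    (hsum : ∑ γ ∈ A, γ = ∑ γ' ∈ A', γ') :
    A = A' := by
  classical
  subst hpos0 hpos1
  have hB :=
    isBalancedPair_sdiff hΦ hpos hmaxA.1 hmaxA'.1 hantiA hantiA' hlongA hlongA' hnonneg hsum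
  have hP : IsZeroSumFree {β ∈ pos | f β = 0} := (hpos.isZeroSumFree hΦ).mono (Set.sep_subset _ _)
  exact Finset.Subset.antisymm (Finset.sdiff_eq_empty_iff_subset.1 (hB.left_eq_empty hP hL))
    (Finset.sdiff_eq_empty_iff_subset.1 (hB.symm.left_eq_empty hP hL))

/-- Tube-type uniqueness: two antichains `A, A'` in `Φ₁⁺` which are both
maximal-cardinality orthogonal subsets, consisting of long roots with nonnegative mutual
pairings, and with equal sums `Σ_{γ∈A} γ = Σ_{γ'∈A'} γ'`, must coincide. -/
theorem stmt11 {V : Type*} [NormedAddCommGroup V] [InnerProductSpace ℝ V]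
    (Φ pos : Set V) (hΦ : IsRootSystem Φ) (hpos : IsPositiveSystem Φ pos)
    (f : V →ₗ[ℝ] ℝ)
    (hf01 : ∀ β ∈ pos, f β = 0 ∨ f β = 1)
    (pos0 pos1 : Set V)
    (hpos0 : pos0 = {β ∈ pos | f β = 0})
    (hpos1 : pos1 = {β ∈ pos | f β = 1})
    (A A' : Finset V) (L : ℝ) (hL : 0 < L)
    (hmaxA : IsMaxOrthSubset pos1 A) (hmaxA' : IsMaxOrthSubset pos1 A')
    (hantiA : IsAntichainDom pos0 A) (hantiA' : IsAntichainDom pos0 A')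
    (hlongA : ∀ γ ∈ A, ⟪γ, γ⟫ = L) (hlongA' : ∀ γ' ∈ A', ⟪γ', γ'⟫ = L)
    (hnonneg : ∀ γ ∈ A, ∀ γ' ∈ A', 0 ≤ ⟪γ, γ'⟫)
    (hsum : ∑ γ ∈ A, γ = ∑ γ' ∈ A', γ') :
    A = A' :=
  stmt11_general Φ pos hΦ hpos f pos0 pos1 hpos0 hpos1 A A' L hL hmaxA hmaxA' hantiA hantiA' hlongA
    hlongA' hnonneg hsum
end
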